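/- (Scale-step lemma, single cube version) For every n ≥ 2 there is a constant C_n depending only on n such that the following holds. Let 0 < δ ≤ 1/2, W > 0, and suppose l_{j,a} are lines in ℝ^n, for j = 1, ..., n and a = 1, ..., N_j, each making an angle of at most δ with the x_j-axis. Let T_{j,a,W} be the characteristic function of the W-neighborhood of l_{j,a} and set f_{j,W} = Σ_{a=1}^{N_j} T_{j,a,W}. If Q is any axis-parallel cube whose side length lies between (1/(20n)) δ^{-1} W and (1/(10n)) δ^{-1} W, then ∫_{Q} ∏_{j=1}^n f_{j,W}^{1/(n-1)} ≤ C_n δ^n ∫_{Q} ∏_{j=1}^n f_{j,δ^{-1}W}^{1/(n-1)}. -/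

import Mathlib

/-!
Let `A_j` be the set of tubes of the `j`-th family whose `W`-neighbourhood meets the cube `Q`.
Since `Q` has diameter at most `δ⁻¹ W / 10`, the `δ⁻¹ W`-neighbourhood of each of them contains
all of `Q`, so the right-hand side is at least `C δⁿ ∏_j |A_j|^{1/(n-1)} |Q|`. On the other hand,
inside `Q` the `W`-neighbourhood of a line at angle `≤ δ` to the `x_j`-axis lies in a slab
`{x : |x_i - y_i| ≤ 10 W for i ≠ j}`, whose indicator does not depend on `x_j`. The
Loomis–Whitney inequality bounds the integral of the product of these slab counts by
`∏_j (|A_j| (20 W)^{n-1})^{1/(n-1)} = (20 W)ⁿ ∏_j |A_j|^{1/(n-1)}`, and `20 W ≲ δ |Q|^{1/n}`.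
-/

open MeasureTheory Finset
open scoped ENNReal

noncomputable section

/-- The line in `ℝⁿ` through `p` with direction `v`. -/
def line {n : ℕ} (p v : EuclideanSpace ℝ (Fin n)) : Set (EuclideanSpace ℝ (Fin n)) :=
  {x | ∃ t : ℝ, x = p + t • v}

/-- `ℝ≥0∞`-valued characteristic function of the `W`-neighborhood of the set `A`:
the indicator of `{x : dist(x, A) ≤ W}`. -/
def tubeFn {n : ℕ} (A : Set (EuclideanSpace ℝ (Fin n))) (W : ℝ)
    (x : EuclideanSpace ℝ (Fin n)) : ℝ≥0∞ :=
  Set.indicator {y | Metric.infDist y A ≤ W} 1 x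

/-- Axis-parallel cube with corner `c` and side length `S`. -/
def cube {n : ℕ} (c : EuclideanSpace ℝ (Fin n)) (S : ℝ) : Set (EuclideanSpace ℝ (Fin n)) :=
  {x | ∀ i, x i ∈ Set.Icc (c i) (c i + S)}

/-- The projection `ℝⁿ → ℝ^{n-1}` forgetting the `j`-th coordinate. -/
def proj {n : ℕ} (j : Fin n) (x : EuclideanSpace ℝ (Fin n)) :
    EuclideanSpace ℝ (Fin (n - 1)) :=
  WithLp.toLp 2 (fun i : Fin (n - 1) =>
    if (i : ℕ) < (j : ℕ) then x ⟨i, by omega⟩ else x ⟨i + 1, by omega⟩)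

/-- The graph of `g : ℝ → ℝ^{n-1}` over the `x_j`-axis. -/
def lipGraph {n : ℕ} (j : Fin n) (g : ℝ → EuclideanSpace ℝ (Fin (n - 1))) :
    Set (EuclideanSpace ℝ (Fin n)) :=
  {x | proj j x = g (x j)}

section LoomisWhitney

variable {ι : Type*} [DecidableEq ι] {X : ι → Type*} [∀ i, MeasurableSpace (X i)]
  (μ : ∀ i, Measure (X i)) {p : ℝ} {f : ι → (∀ i, X i) → ℝ≥0∞}

theorem lmarginal_finset_sum {κ : Type*} (A : Finset κ) {g : κ → (∀ i, X i) → ℝ≥0∞}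
    (hg : ∀ a ∈ A, Measurable (g a)) (s : Finset ι) (x : ∀ i, X i) :
    (∫⋯∫⁻_s, ∑ a ∈ A, g a ∂μ) x = ∑ a ∈ A, (∫⋯∫⁻_s, g a ∂μ) x := by
  simp_rw [lmarginal, Finset.sum_apply]
  exact lintegral_finsetSum _ fun a ha ↦ (hg a ha).comp measurable_updateFinset

variable [∀ i, SigmaFinite (μ i)]

theorem lmarginal_update_of_update_eq {g : (∀ i, X i) → ℝ≥0∞} (hg : Measurable g) {j : ι}
    (hgj : ∀ x t, g (Function.update x j t) = g x) {s : Finset ι} (hj : j ∉ s)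
    (x : ∀ i, X i) (t : X j) :
    (∫⋯∫⁻_s, g ∂μ) (Function.update x j t) = (∫⋯∫⁻_s, g ∂μ) x := by
  rw [lmarginal_update_of_notMem hg hj]
  exact congrArg (fun g ↦ (∫⋯∫⁻_s, g ∂μ) x) (funext fun z ↦ hgj z t)

theorem lmarginal_indicator_pi (s : Finset ι) {I : ∀ i, Set (X i)}
    (hI : ∀ i, MeasurableSet (I i)) (x : ∀ i, X i) :
    (∫⋯∫⁻_s, (Set.pi s I).indicator 1 ∂μ) x = ∏ i ∈ s, μ i (I i) := by
  have hpi : ∀ y : ∀ i : s, X i, (Set.pi s I).indicator 1 (Function.updateFinset x s y)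
      = (Set.univ.pi fun i : s ↦ I i).indicator (1 : (∀ i : s, X i) → ℝ≥0∞) y := by
    intro y
    have hmem : Function.updateFinset x s y ∈ Set.pi s I ↔ y ∈ Set.univ.pi fun i : s ↦ I i := by
      simp only [Set.mem_pi, Set.mem_univ, true_implies, Subtype.forall, Finset.mem_coe,
        Function.updateFinset]
      exact forall₂_congr fun i hi ↦ by rw [dif_pos hi]
    by_cases hy : y ∈ Set.univ.pi fun i : s ↦ I i
    · rw [Set.indicator_of_mem hy, Set.indicator_of_mem (hmem.2 hy)]; rfl
    · rw [Set.indicator_of_notMem hy, Set.indicator_of_notMem (mt hmem.1 hy)]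
  simp_rw [lmarginal, hpi]
  rw [lintegral_indicator_one (MeasurableSet.univ_pi fun i : s ↦ hI i), Measure.pi_pi]
  exact prod_coe_sort s fun i ↦ μ i (I i)

variable [Fintype ι]

theorem lmarginal_compl_prod_rpow_le_insert (hp0 : 0 ≤ p)
    (hp : ((Fintype.card ι : ℝ) - 1) * p = 1) (hf : ∀ i, Measurable (f i))
    (hfi : ∀ i x t, f i (Function.update x i t) = f i x) {s : Finset ι} {j : ι} (hj : j ∉ s) :
    ∫⋯∫⁻_sᶜ, (fun x ↦ ∏ i, ((∫⋯∫⁻_(s.erase i), f i ∂μ) x) ^ p) ∂μ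
      ≤ ∫⋯∫⁻_(insert j s)ᶜ,
          (fun x ↦ ∏ i, ((∫⋯∫⁻_((insert j s).erase i), f i ∂μ) x) ^ p) ∂μ := by
  have hF : ∀ (t : Finset ι) i, Measurable (∫⋯∫⁻_t, f i ∂μ) := fun t i ↦ (hf i).lmarginal μ
  have hcompl : sᶜ = insert j (insert j s)ᶜ := by
    rw [compl_insert, insert_erase (mem_compl.2 hj)]
  rw [hcompl, lmarginal_insert' _ (measurable_prod _ fun i _ ↦ (hF _ i).pow_const _)
    (by simp)]
  refine lmarginal_mono fun x ↦ ?_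
  -- the `j`-th factor does not depend on `x j`; Hölder's inequality handles the other `n - 1`
  have hsplit : ∀ t : X j, ∏ i, ((∫⋯∫⁻_(s.erase i), f i ∂μ) (Function.update x j t)) ^ p
      = ((∫⋯∫⁻_s, f j ∂μ) x) ^ p *
        ∏ i ∈ univ.erase j, ((∫⋯∫⁻_(s.erase i), f i ∂μ) (Function.update x j t)) ^ p := by
    intro t
    rw [← mul_prod_erase _ _ (mem_univ j), erase_eq_of_notMem hj,
      lmarginal_update_of_update_eq μ (hf j) (hfi j) hj]
  have hholder : ∑ _i ∈ univ.erase j, p = 1 := by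
    rw [sum_const, card_erase_of_mem (mem_univ j), card_univ, nsmul_eq_mul,
      Nat.cast_sub (Fintype.card_pos_iff.mpr ⟨j⟩), Nat.cast_one, hp]
  have hmeas : Measurable fun t : X j ↦
      ∏ i ∈ univ.erase j, ((∫⋯∫⁻_(s.erase i), f i ∂μ) (Function.update x j t)) ^ p :=
    measurable_prod _ fun i _ ↦ ((hF _ i).comp (measurable_update _)).pow_const _
  simp_rw [hsplit]
  rw [lintegral_const_mul _ hmeas]
  calc ((∫⋯∫⁻_s, f j ∂μ) x) ^ p *
        ∫⁻ t, ∏ i ∈ univ.erase j, ((∫⋯∫⁻_(s.erase i), f i ∂μ) (Function.update x j t)) ^ p ∂μ j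
      ≤ ((∫⋯∫⁻_s, f j ∂μ) x) ^ p * ∏ i ∈ univ.erase j,
          (∫⁻ t, (∫⋯∫⁻_(s.erase i), f i ∂μ) (Function.update x j t) ∂μ j) ^ p := by
        gcongr
        exact ENNReal.lintegral_prod_norm_pow_le _
          (fun i _ ↦ ((hF _ i).comp (measurable_update _)).aemeasurable) hholder
          (fun _ _ ↦ hp0)
    _ = ∏ i, ((∫⋯∫⁻_((insert j s).erase i), f i ∂μ) x) ^ p := by
        rw [← mul_prod_erase _ _ (mem_univ j), erase_insert hj]
        congr 1
        refine prod_congr rfl fun i hi ↦ ?_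
        have hij : j ≠ i := (ne_of_mem_erase hi).symm
        rw [erase_insert_of_ne hij, lmarginal_insert _ (hf i) fun h ↦ hj (mem_of_mem_erase h)]

/-- The Loomis–Whitney inequality. -/
theorem lintegral_prod_rpow_le_prod_lmarginal (hp0 : 0 ≤ p)
    (hp : ((Fintype.card ι : ℝ) - 1) * p = 1) (hf : ∀ i, Measurable (f i))
    (hfi : ∀ i x t, f i (Function.update x i t) = f i x) (x₀ : ∀ i, X i) :
    ∫⁻ x, ∏ i, f i x ^ p ∂Measure.pi μ ≤ ∏ i, ((∫⋯∫⁻_(univ.erase i), f i ∂μ) x₀) ^ p := by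
  have hmono : ∀ s : Finset ι,
      ∫⋯∫⁻_(∅ : Finset ι)ᶜ, (fun x ↦ ∏ i, ((∫⋯∫⁻_((∅ : Finset ι).erase i), f i ∂μ) x) ^ p) ∂μ
        ≤ ∫⋯∫⁻_sᶜ, (fun x ↦ ∏ i, ((∫⋯∫⁻_(s.erase i), f i ∂μ) x) ^ p) ∂μ := by
    intro s
    induction s using Finset.induction with
    | empty => exact le_rfl
    | insert j s hj ih =>
      exact ih.trans (lmarginal_compl_prod_rpow_le_insert μ hp0 hp hf hfi hj)
  simpa using hmono univ x₀

end LoomisWhitney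

section Slab

variable {ι : Type*} [Fintype ι] [DecidableEq ι] {κ : Type*}

def slab (j : ι) (y : ι → ℝ) (r : ℝ) : Set (ι → ℝ) :=
  Set.pi (univ.erase j : Finset ι) fun i ↦ Set.Icc (y i - r) (y i + r)

def slabCount (A : Finset κ) (j : ι) (y : κ → ι → ℝ) (r : ℝ) : (ι → ℝ) → ℝ≥0∞ :=
  ∑ a ∈ A, (slab j (y a) r).indicator 1

theorem measurableSet_slab (j : ι) (y : ι → ℝ) (r : ℝ) : MeasurableSet (slab j y r) :=
  MeasurableSet.pi (Set.toFinite _).countable fun _ _ ↦ measurableSet_Icc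

theorem update_mem_slab_iff {j : ι} {y z : ι → ℝ} {r t : ℝ} :
    Function.update z j t ∈ slab j y r ↔ z ∈ slab j y r := by
  simp only [slab, Set.mem_pi, Finset.mem_coe]
  exact forall₂_congr fun i hi ↦ by rw [Function.update_of_ne (ne_of_mem_erase hi)]

theorem measurable_slabCount (A : Finset κ) (j : ι) (y : κ → ι → ℝ) (r : ℝ) :
    Measurable (slabCount A j y r) := by
  simpa only [slabCount, Finset.sum_fn] using Finset.measurable_sum A fun a _ ↦
    measurable_one.indicator (measurableSet_slab j (y a) r)

theorem slabCount_update (A : Finset κ) (j : ι) (y : κ → ι → ℝ) (r : ℝ) (z : ι → ℝ) (t : ℝ) :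
    slabCount A j y r (Function.update z j t) = slabCount A j y r z := by
  classical
  simp only [slabCount, Finset.sum_apply, Set.indicator_apply, update_mem_slab_iff, Pi.one_apply]

theorem lmarginal_slabCount (A : Finset κ) (j : ι) (y : κ → ι → ℝ) (r : ℝ) (x : ι → ℝ) :
    (∫⋯∫⁻_(univ.erase j), slabCount A j y r ∂fun _ ↦ volume) x
      = #A * ENNReal.ofReal (2 * r) ^ (Fintype.card ι - 1) := by
  rw [slabCount, lmarginal_finset_sum _ _
    fun a _ ↦ measurable_one.indicator (measurableSet_slab j (y a) r)]
  simp_rw [slab, lmarginal_indicator_pi _ _ fun _ ↦ measurableSet_Icc, Real.volume_Icc,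
    add_sub_sub_cancel, ← two_mul, prod_const, card_erase_of_mem (mem_univ j), card_univ,
    sum_const, nsmul_eq_mul]

theorem lintegral_prod_slabCount_rpow_le {κ : ι → Type*} (A : ∀ j, Finset (κ j))
    (y : ∀ j, κ j → ι → ℝ) (r : ℝ) {p : ℝ} (hp0 : 0 ≤ p)
    (hp : ((Fintype.card ι : ℝ) - 1) * p = 1) :
    ∫⁻ z, ∏ j, slabCount (A j) j (y j) r z ^ p
      ≤ (∏ j, (#(A j) : ℝ≥0∞) ^ p) * ENNReal.ofReal (2 * r) ^ Fintype.card ι := by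
  have hcard : 1 ≤ Fintype.card ι := by
    by_contra! h
    rw [Nat.lt_one_iff.1 h, Nat.cast_zero] at hp
    linarith
  have hrpow : (ENNReal.ofReal (2 * r) ^ (Fintype.card ι - 1)) ^ p = ENNReal.ofReal (2 * r) := by
    rw [← ENNReal.rpow_natCast, ← ENNReal.rpow_mul, Nat.cast_sub hcard, Nat.cast_one, hp,
      ENNReal.rpow_one]
  calc ∫⁻ z, ∏ j, slabCount (A j) j (y j) r z ^ p
      = ∫⁻ z, ∏ j, slabCount (A j) j (y j) r z ^ p ∂Measure.pi fun _ ↦ volume := by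
        rw [volume_pi]
    _ ≤ ∏ j, ((∫⋯∫⁻_(univ.erase j), slabCount (A j) j (y j) r ∂fun _ ↦ volume) 0) ^ p :=
        lintegral_prod_rpow_le_prod_lmarginal _ hp0 hp (fun j ↦ measurable_slabCount _ _ _ _)
          (fun j ↦ slabCount_update _ _ _ _) 0
    _ = ∏ j, (#(A j) * ENNReal.ofReal (2 * r) ^ (Fintype.card ι - 1)) ^ p := by
        simp_rw [lmarginal_slabCount]
    _ = (∏ j, (#(A j) : ℝ≥0∞) ^ p) * ENNReal.ofReal (2 * r) ^ Fintype.card ι := by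
        simp_rw [ENNReal.mul_rpow_of_nonneg _ _ hp0, hrpow, prod_mul_distrib, prod_const,
          card_univ]

end Slab

section Directions

open InnerProductGeometry Real

variable {ι : Type*} [Fintype ι] [DecidableEq ι] {v : EuclideanSpace ℝ ι} {i j : ι} {δ : ℝ}

theorem cos_le_apply_of_angle_single_le (hv : ‖v‖ = 1)
    (hangle : angle v (EuclideanSpace.single j 1) ≤ δ) (hδ : δ ≤ π) : cos δ ≤ v j := by
  have hcos : cos (angle v (EuclideanSpace.single j 1)) = v j := by
    simp [cos_angle, hv, EuclideanSpace.inner_single_right]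
  rw [← hcos]
  exact cos_le_cos_of_nonneg_of_le_pi (angle_nonneg _ _) hδ hangle

theorem half_le_apply_of_angle_single_le (hv : ‖v‖ = 1)
    (hangle : angle v (EuclideanSpace.single j 1) ≤ δ) (hδ : δ ≤ 1 / 2) : 1 / 2 ≤ v j := by
  have hδ0 : 0 ≤ δ := (angle_nonneg _ _).trans hangle
  have hcos := cos_le_apply_of_angle_single_le hv hangle (by linarith [pi_gt_three])
  nlinarith [one_sub_sq_div_two_le_cos (x := δ)]

theorem abs_apply_le_of_angle_single_le (hv : ‖v‖ = 1)
    (hangle : angle v (EuclideanSpace.single j 1) ≤ δ) (hδ : δ ≤ π / 2) (hij : i ≠ j) :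
    |v i| ≤ δ := by
  have hδ0 : 0 ≤ δ := (angle_nonneg _ _).trans hangle
  have hcos := cos_le_apply_of_angle_single_le hv hangle (by linarith [pi_pos])
  have hcos0 : 0 ≤ cos δ := cos_nonneg_of_mem_Icc ⟨by linarith [pi_pos], hδ⟩
  -- `v i ^ 2 ≤ 1 - v j ^ 2 ≤ 1 - cos δ ^ 2 = sin δ ^ 2 ≤ δ ^ 2`
  have hsum : v i ^ 2 + v j ^ 2 ≤ 1 := by
    have hnorm : ∑ k, v k ^ 2 = 1 := by simpa [hv, eq_comm] using EuclideanSpace.norm_sq_eq v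
    exact hnorm ▸ add_le_sum (fun _ _ ↦ sq_nonneg _) (mem_univ i) (mem_univ j) hij
  have hsin := sin_le hδ0
  have hsin0 : 0 ≤ sin δ := sin_nonneg_of_nonneg_of_le_pi hδ0 (by linarith [pi_pos])
  refine abs_le_of_sq_le_sq' ?_ hδ0 |> abs_le.2
  nlinarith [sin_sq_add_cos_sq δ]

end Directions

section Tubes

variable {n : ℕ}

theorem abs_sub_apply_le_of_mem_cube {c x y : EuclideanSpace ℝ (Fin n)} {L : ℝ}
    (hx : x ∈ cube c L) (hy : y ∈ cube c L) (i : Fin n) : |x i - y i| ≤ L := by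
  rw [abs_sub_le_iff]
  constructor <;> linarith [(hx i).1, (hx i).2, (hy i).1, (hy i).2]

theorem dist_le_of_mem_cube {c x y : EuclideanSpace ℝ (Fin n)} {L : ℝ} (hx : x ∈ cube c L)
    (hy : y ∈ cube c L) : dist x y ≤ n * L := by
  have hcoord : ∀ i, dist (x i) (y i) ≤ L := abs_sub_apply_le_of_mem_cube hx hy
  calc dist x y = √(∑ i, dist (x i) (y i) ^ 2) := EuclideanSpace.dist_eq x y
    _ ≤ √((∑ i, dist (x i) (y i)) ^ 2) :=
        Real.sqrt_le_sqrt (sum_sq_le_sq_sum_of_nonneg fun _ _ ↦ dist_nonneg)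
    _ = ∑ i, dist (x i) (y i) := Real.sqrt_sq (sum_nonneg fun _ _ ↦ dist_nonneg)
    _ ≤ n * L := by simpa using sum_le_sum fun i (_ : i ∈ univ) ↦ hcoord i

theorem abs_sub_apply_le_of_mem_line {q v y y' : EuclideanSpace ℝ (Fin n)} {i j : Fin n}
    {δ : ℝ} (hy : y ∈ line q v) (hy' : y' ∈ line q v) (hvj : 1 / 2 ≤ v j) (hvi : |v i| ≤ δ) :
    |y i - y' i| ≤ 2 * δ * |y j - y' j| := by
  obtain ⟨t, rfl⟩ := hy
  obtain ⟨t', rfl⟩ := hy'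
  have hdiff : ∀ k, (q + t • v) k - (q + t' • v) k = (t - t') * v k := fun k ↦ by
    simp only [PiLp.add_apply, PiLp.smul_apply, smul_eq_mul]; ring
  rw [hdiff, hdiff, abs_mul, abs_mul, abs_of_pos (by linarith : 0 < v j)]
  have hδ0 : 0 ≤ δ := (abs_nonneg _).trans hvi
  nlinarith [mul_le_mul_of_nonneg_left hvi (abs_nonneg (t - t')),
    mul_nonneg (mul_nonneg (abs_nonneg (t - t')) hδ0) (by linarith : 0 ≤ 2 * v j - 1)]

theorem abs_sub_apply_le_of_infDist_line_le {q v x x' : EuclideanSpace ℝ (Fin n)} {i j : Fin n}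
    {W L δ : ℝ} (hW : 0 < W) (hδ : δ ≤ 1 / 2) (hδL : δ * L ≤ W) (hvj : 1 / 2 ≤ v j)
    (hvi : |v i| ≤ δ) (hx : Metric.infDist x (line q v) ≤ W)
    (hx' : Metric.infDist x' (line q v) ≤ W) (hL : |x j - x' j| ≤ L) :
    |x i - x' i| ≤ 10 * W := by
  have hne : (line q v).Nonempty := ⟨q, 0, by simp⟩
  obtain ⟨y, hy, hxy⟩ := (Metric.infDist_lt_iff hne).1 (hx.trans_lt (by linarith : W < 2 * W))
  obtain ⟨y', hy', hxy'⟩ :=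
    (Metric.infDist_lt_iff hne).1 (hx'.trans_lt (by linarith : W < 2 * W))
  have hclose : ∀ k, |(x k - x' k) - (y k - y' k)| ≤ 4 * W := fun k ↦ by
    have hxk := (PiLp.dist_apply_le x y k).trans hxy.le
    have hxk' := (PiLp.dist_apply_le x' y' k).trans hxy'.le
    rw [Real.dist_eq] at hxk hxk'
    calc |(x k - x' k) - (y k - y' k)| = |(x k - y k) - (x' k - y' k)| := by ring_nf
      _ ≤ |x k - y k| + |x' k - y' k| := abs_sub _ _
      _ ≤ 4 * W := by linarith
  have hyj : |y j - y' j| ≤ L + 4 * W := by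
    linarith [abs_sub_abs_le_abs_sub (y j - y' j) (x j - x' j),
      abs_sub_comm (y j - y' j) (x j - x' j), hclose j]
  have hδ0 : 0 ≤ δ := (abs_nonneg _).trans hvi
  have hyi : |y i - y' i| ≤ 2 * δ * (L + 4 * W) :=
    (abs_sub_apply_le_of_mem_line hy hy' hvj hvi).trans (by gcongr)
  nlinarith [abs_sub_abs_le_abs_sub (x i - x' i) (y i - y' i), hclose i]

end Tubes

section Counting

variable {n : ℕ} {κ : Type*} [Fintype κ]

open Classical in
def tubesMeeting {α : Type*} [PseudoMetricSpace α] (Q : Set α) (S : κ → Set α) (W : ℝ) :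
    Finset κ :=
  {a | ∃ x ∈ Q, Metric.infDist x (S a) ≤ W}

theorem mem_tubesMeeting {α : Type*} [PseudoMetricSpace α] {Q : Set α} {S : κ → Set α} {W : ℝ}
    {a : κ} : a ∈ tubesMeeting Q S W ↔ ∃ x ∈ Q, Metric.infDist x (S a) ≤ W := by
  simp [tubesMeeting]

theorem measurable_tubeFn (S : Set (EuclideanSpace ℝ (Fin n))) (W : ℝ) :
    Measurable (tubeFn S W) :=
  measurable_one.indicator
    (isClosed_le (Metric.continuous_infDist_pt S) continuous_const).measurableSet

theorem tubeFn_eq_one {S : Set (EuclideanSpace ℝ (Fin n))} {W : ℝ} {x : EuclideanSpace ℝ (Fin n)}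
    (hx : Metric.infDist x S ≤ W) : tubeFn S W x = 1 :=
  Set.indicator_of_mem (s := {y | Metric.infDist y S ≤ W}) hx 1

theorem tubeFn_le_indicator {β : Type*} {S : Set (EuclideanSpace ℝ (Fin n))} {W : ℝ}
    {x : EuclideanSpace ℝ (Fin n)} {T : Set β} {x' : β} (h : Metric.infDist x S ≤ W → x' ∈ T) :
    tubeFn S W x ≤ T.indicator 1 x' := by
  by_cases hx : Metric.infDist x S ≤ W
  · rw [tubeFn_eq_one hx, Set.indicator_of_mem (h hx)]
    rfl
  · exact (Set.indicator_of_notMem (s := {y | Metric.infDist y S ≤ W}) hx 1).trans_le zero_le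

theorem card_tubesMeeting_le_sum_tubeFn {S : κ → Set (EuclideanSpace ℝ (Fin n))}
    {Q : Set (EuclideanSpace ℝ (Fin n))} {W W' D : ℝ} (hQ : ∀ x ∈ Q, ∀ y ∈ Q, dist x y ≤ D)
    (hW : W + D ≤ W') {x : EuclideanSpace ℝ (Fin n)} (hx : x ∈ Q) :
    (#(tubesMeeting Q S W) : ℝ≥0∞) ≤ ∑ a, tubeFn (S a) W' x := by
  calc (#(tubesMeeting Q S W) : ℝ≥0∞) = ∑ a ∈ tubesMeeting Q S W, tubeFn (S a) W' x := by
        rw [card_eq_sum_ones, Nat.cast_sum, Nat.cast_one]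
        refine sum_congr rfl fun a ha ↦ (tubeFn_eq_one ?_).symm
        obtain ⟨x₀, hx₀, hx₀S⟩ := mem_tubesMeeting.1 ha
        linarith [Metric.infDist_le_infDist_add_dist (s := S a) (x := x) (y := x₀), hQ x hx x₀ hx₀]
    _ ≤ ∑ a, tubeFn (S a) W' x := sum_le_sum_of_subset (subset_univ _)

theorem sum_tubeFn_le_slabCount {q v : κ → EuclideanSpace ℝ (Fin n)} {j : Fin n}
    {c : EuclideanSpace ℝ (Fin n)} {W L δ : ℝ} (hW : 0 < W) (hδ : δ ≤ 1 / 2) (hδL : δ * L ≤ W)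
    (hvj : ∀ a, 1 / 2 ≤ v a j) (hvi : ∀ a i, i ≠ j → |v a i| ≤ δ)
    {xw : κ → EuclideanSpace ℝ (Fin n)}
    (hxw : ∀ a ∈ tubesMeeting (cube c L) (fun a ↦ line (q a) (v a)) W,
      xw a ∈ cube c L ∧ Metric.infDist (xw a) (line (q a) (v a)) ≤ W)
    {x : EuclideanSpace ℝ (Fin n)} (hx : x ∈ cube c L) :
    ∑ a, tubeFn (line (q a) (v a)) W x
      ≤ slabCount (tubesMeeting (cube c L) (fun a ↦ line (q a) (v a)) W) j
          (fun a ↦ WithLp.ofLp (xw a)) (10 * W) (WithLp.ofLp x) := by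
  set A := tubesMeeting (cube c L) (fun a ↦ line (q a) (v a)) W
  have hzero : ∀ a ∉ A, tubeFn (line (q a) (v a)) W x = 0 := fun a ha ↦
    Set.indicator_of_notMem (fun hxa ↦ ha (mem_tubesMeeting.2 ⟨x, hx, hxa⟩)) 1
  rw [slabCount, Finset.sum_apply, ← sum_subset (subset_univ A) fun a _ ha ↦ hzero a ha]
  refine sum_le_sum fun a ha ↦ tubeFn_le_indicator fun hxa i hi ↦ ?_
  have hxi := abs_sub_apply_le_of_infDist_line_le hW hδ hδL (hvj a)
    (hvi a i (ne_of_mem_erase hi)) hxa (hxw a ha).2 (abs_sub_apply_le_of_mem_cube hx (hxw a ha).1 j)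
  rw [abs_sub_le_iff] at hxi
  exact ⟨by linarith, by linarith⟩

end Counting

section Integrals

variable {n : ℕ} {κ : Fin n → Type*} [∀ j, Fintype (κ j)] {p : ℝ}

theorem volume_cube (c : EuclideanSpace ℝ (Fin n)) (L : ℝ) :
    volume (cube c L) = ENNReal.ofReal L ^ n := by
  have hcube : cube c L = WithLp.ofLp ⁻¹' Set.univ.pi fun i ↦ Set.Icc (c i) (c i + L) := by
    ext x
    simp only [cube, Set.mem_ofPred_eq, Set.mem_preimage, Set.mem_univ_pi]
  rw [hcube, (PiLp.volume_preserving_ofLp (Fin n)).measure_preimage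
    (MeasurableSet.univ_pi fun _ ↦ measurableSet_Icc).nullMeasurableSet, volume_pi_pi]
  simp

theorem prod_card_tubesMeeting_mul_volume_le {S : ∀ j, κ j → Set (EuclideanSpace ℝ (Fin n))}
    {Q : Set (EuclideanSpace ℝ (Fin n))} {W W' D : ℝ} (hQ : ∀ x ∈ Q, ∀ y ∈ Q, dist x y ≤ D)
    (hW : W + D ≤ W') (hp0 : 0 ≤ p) :
    (∏ j, (#(tubesMeeting Q (S j) W) : ℝ≥0∞) ^ p) * volume Q
      ≤ ∫⁻ x in Q, ∏ j, (∑ a, tubeFn (S j a) W' x) ^ p := by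
  rw [← setLIntegral_const]
  refine setLIntegral_mono (measurable_prod _ fun j _ ↦
    (Finset.measurable_sum _ fun a _ ↦ measurable_tubeFn _ _).pow_const _) fun x hx ↦ ?_
  exact prod_le_prod' fun j _ ↦
    ENNReal.rpow_le_rpow (card_tubesMeeting_le_sum_tubeFn hQ hW hx) hp0

theorem setLIntegral_cube_prod_sum_tubeFn_le {q v : ∀ j, κ j → EuclideanSpace ℝ (Fin n)}
    {c : EuclideanSpace ℝ (Fin n)} {W L δ : ℝ} (hW : 0 < W) (hδ : δ ≤ 1 / 2) (hδL : δ * L ≤ W)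
    (hvj : ∀ j a, 1 / 2 ≤ v j a j) (hvi : ∀ j a i, i ≠ j → |v j a i| ≤ δ) (hp0 : 0 ≤ p)
    (hp : ((n : ℝ) - 1) * p = 1) :
    ∫⁻ x in cube c L, ∏ j, (∑ a, tubeFn (line (q j a) (v j a)) W x) ^ p
      ≤ (∏ j, (#(tubesMeeting (cube c L) (fun a ↦ line (q j a) (v j a)) W) : ℝ≥0∞) ^ p) *
          ENNReal.ofReal (20 * W) ^ n := by
  set A := fun j ↦ tubesMeeting (cube c L) (fun a ↦ line (q j a) (v j a)) W
  choose! xw hxw using fun j a (ha : a ∈ A j) ↦ mem_tubesMeeting.1 ha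
  have hmeas : Measurable fun z : Fin n → ℝ ↦
      ∏ j, slabCount (A j) j (fun a ↦ WithLp.ofLp (xw j a)) (10 * W) z ^ p :=
    measurable_prod _ fun j _ ↦ (measurable_slabCount _ _ _ _).pow_const _
  calc ∫⁻ x in cube c L, ∏ j, (∑ a, tubeFn (line (q j a) (v j a)) W x) ^ p
      ≤ ∫⁻ x in cube c L, ∏ j,
          slabCount (A j) j (fun a ↦ WithLp.ofLp (xw j a)) (10 * W) (WithLp.ofLp x) ^ p :=
        setLIntegral_mono (hmeas.comp (PiLp.volume_preserving_ofLp (Fin n)).measurable)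
          fun x hx ↦ prod_le_prod' fun j _ ↦ ENNReal.rpow_le_rpow
            (sum_tubeFn_le_slabCount hW hδ hδL (hvj j) (hvi j) (fun a ha ↦ hxw j a ha) hx) hp0
    _ ≤ ∫⁻ x, ∏ j,
          slabCount (A j) j (fun a ↦ WithLp.ofLp (xw j a)) (10 * W) (WithLp.ofLp x) ^ p :=
        setLIntegral_le_lintegral _ _
    _ = ∫⁻ z, ∏ j, slabCount (A j) j (fun a ↦ WithLp.ofLp (xw j a)) (10 * W) z ^ p :=
        (PiLp.volume_preserving_ofLp (Fin n)).lintegral_comp hmeas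
    _ ≤ (∏ j, (#(A j) : ℝ≥0∞) ^ p) * ENNReal.ofReal (20 * W) ^ n := by
        have := lintegral_prod_slabCount_rpow_le A (fun j a ↦ WithLp.ofLp (xw j a)) (10 * W) hp0
          (by rwa [Fintype.card_fin])
        rwa [Fintype.card_fin, ← mul_assoc, show (2 : ℝ) * 10 = 20 by norm_num] at this

end Integrals

/-- Scale-step lemma, single cube version: there is `C_n` such that for `0 < δ ≤ 1/2`,
`W > 0`, lines making angle at most `δ` with the corresponding axes, and any cube `Q` of side
length between `(20n)⁻¹ δ⁻¹ W` and `(10n)⁻¹ δ⁻¹ W`,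
`∫_Q ∏_j f_{j,W}^{1/(n-1)} ≤ C_n δⁿ ∫_Q ∏_j f_{j,δ⁻¹W}^{1/(n-1)}`. -/
theorem scale_step_single_cube (n : ℕ) (hn : 2 ≤ n) :
    ∃ C : ℝ, 0 < C ∧
      ∀ (δ W : ℝ), 0 < δ → δ ≤ 1 / 2 → 0 < W →
      ∀ (N : Fin n → ℕ) (p v : (j : Fin n) → Fin (N j) → EuclideanSpace ℝ (Fin n)),
        (∀ j a, ‖v j a‖ = 1) →
        (∀ j a, InnerProductGeometry.angle (v j a) (EuclideanSpace.single j 1) ≤ δ) →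
        ∀ L : ℝ, (1 / (20 * n)) * δ⁻¹ * W ≤ L → L ≤ (1 / (10 * n)) * δ⁻¹ * W →
        ∀ c : EuclideanSpace ℝ (Fin n),
          ∫⁻ x in cube c L,
              ∏ j : Fin n, (∑ a : Fin (N j),
                tubeFn (line (p j a) (v j a)) W x) ^ ((1 : ℝ) / ((n : ℝ) - 1))
            ≤ ENNReal.ofReal (C * δ ^ n) *
                ∫⁻ x in cube c L,
                  ∏ j : Fin n, (∑ a : Fin (N j),
                    tubeFn (line (p j a) (v j a)) (δ⁻¹ * W) x) ^ ((1 : ℝ) / ((n : ℝ) - 1)) := by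
  refine ⟨(400 * n) ^ n, by positivity, ?_⟩
  intro δ W hδ hδ2 hW N p v hv hangle L hL1 hL2 c
  have hn1 : (1 : ℝ) < n := by exact_mod_cast hn
  have hL1' : W ≤ 20 * n * δ * L := by
    rwa [show 1 / (20 * n) * δ⁻¹ * W = W / (20 * n * δ) by field_simp,
      div_le_iff₀ (by positivity), mul_comm] at hL1
  have hL2' : 10 * n * δ * L ≤ W := by
    rwa [show 1 / (10 * n) * δ⁻¹ * W = W / (10 * n * δ) by field_simp,
      le_div_iff₀ (by positivity), mul_comm] at hL2
  have hL0 : 0 < L := pos_of_mul_pos_right (hW.trans_le hL1') (by positivity)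
  have hδL : δ * L ≤ W := by nlinarith
  have hW' : W + n * L ≤ δ⁻¹ * W := by
    rw [le_inv_mul_iff₀ hδ]; nlinarith
  have hp : ((n : ℝ) - 1) * (1 / ((n : ℝ) - 1)) = 1 := mul_one_div_cancel (by linarith)
  have hp0 : (0 : ℝ) ≤ 1 / ((n : ℝ) - 1) := by rw [one_div_nonneg]; linarith
  calc _ ≤ _ := setLIntegral_cube_prod_sum_tubeFn_le hW hδ2 hδL
          (fun j a ↦ half_le_apply_of_angle_single_le (hv j a) (hangle j a) hδ2)
          (fun j a i hij ↦ abs_apply_le_of_angle_single_le (hv j a) (hangle j a)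
            (by linarith [Real.pi_gt_three]) hij) hp0 hp
    _ ≤ _ * (ENNReal.ofReal ((400 * n) ^ n * δ ^ n) * volume (cube c L)) := by
        gcongr
        rw [volume_cube, ← ENNReal.ofReal_pow (by positivity), ← ENNReal.ofReal_pow hL0.le,
          ← ENNReal.ofReal_mul (by positivity), ← mul_pow, ← mul_pow]
        exact ENNReal.ofReal_le_ofReal (pow_le_pow_left₀ (by positivity) (by nlinarith) n)
    _ = ENNReal.ofReal ((400 * n) ^ n * δ ^ n) * (_ * volume (cube c L)) := mul_left_comm _ _ _
    _ ≤ _ := by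
        gcongr
        exact prod_card_tubesMeeting_mul_volume_le (fun x hx y hy ↦ dist_le_of_mem_cube hx hy)
          hW' hp0
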